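/- Let γ ∈ (0, 1/4) and t ≥ 1. For f, g, h : ℝ → ℂ with ⟨x⟩f, ⟨x⟩g, ⟨x⟩h ∈ L²(ℝ), define 𝒪^t[f,g,h](ξ) := (π/t) ∫∫∫_{ℝ³} f(x₁) conj(g(x₂)) h(x₃) e^{−iξ(x₁−x₂+x₃)} ( e^{−i(x₁−x₂)(x₂−x₃)/(2t)} − 1 ) dx₁dx₂dx₃. Then sup_{ξ∈ℝ} |𝒪^t[f,g,h](ξ)| ≤ C_γ t^{−1−γ} ‖⟨x⟩f‖_{L²} ‖⟨x⟩g‖_{L²} ‖⟨x⟩h‖_{L²}. -/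

import Mathlib

open MeasureTheory Complex
open scoped Real

/-- `‖⟨x⟩ f‖_{L²(ℝ)}` where `⟨x⟩ = (1+x²)^{1/2}`. -/
noncomputable def japL2 (f : ℝ → ℂ) : ℝ :=
  (∫ x : ℝ, (1 + x ^ 2) * ‖f x‖ ^ 2) ^ (1/2 : ℝ)

/-- The space non-resonant trilinear form
`𝒪^t[f,g,h](ξ) = (π/t) ∫∫∫ f(x₁) conj(g(x₂)) h(x₃) e^{−iξ(x₁−x₂+x₃)}
(e^{−i(x₁−x₂)(x₂−x₃)/(2t)} − 1) dx₁dx₂dx₃`. -/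
noncomputable def spaceNR (t : ℝ) (f g h : ℝ → ℂ) (ξ : ℝ) : ℂ :=
  ((π / t : ℝ) : ℂ) *
    ∫ x₁ : ℝ, ∫ x₂ : ℝ, ∫ x₃ : ℝ,
      f x₁ * (starRingEnd ℂ) (g x₂) * h x₃ *
        Complex.exp (-I * ξ * ((x₁ : ℂ) - x₂ + x₃)) *
        (Complex.exp (-I * ((x₁ : ℂ) - x₂) * ((x₂ : ℂ) - x₃) / (2 * t)) - 1)


lemma aux_weight_integrable {p : ℝ} (hp : p < -(1/2)) :
    Integrable (fun x : ℝ => (1 + x ^ 2) ^ p) := by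
  have h : ((Module.finrank ℝ ℝ : ℝ)) < -2 * p := by
    simp only [Module.finrank_self, Nat.cast_one]; linarith
  have H := integrable_rpow_neg_one_add_norm_sq (E := ℝ) (μ := volume) h
  have he : -(-2 * p) / 2 = p := by ring
  simpa [Real.norm_eq_abs, sq_abs, he] using H

lemma aux_exp_bound {γ : ℝ} (hγ0 : 0 < γ) (hγ1 : γ ≤ 1) (θ : ℝ) :
    ‖Complex.exp ((θ : ℂ) * I) - 1‖ ≤ 2 * |θ| ^ γ := by
  rcases eq_or_ne θ 0 with rfl | hθ0
  · simp [Real.zero_rpow hγ0.ne']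
  by_cases hθ : |θ| ≤ 1
  · have h1 : ‖Complex.exp ((θ : ℂ) * I) - 1‖ ≤ 2 * |θ| := by
      have habs : ‖(θ : ℂ) * I‖ = |θ| := by
        simp [map_mul]
      have := Complex.norm_exp_sub_one_le (x := (θ : ℂ) * I) (by rw [habs]; exact hθ)
      rw [habs] at this
      simpa using this
    have h2 : |θ| ≤ |θ| ^ γ := by
      nth_rewrite 1 [← Real.rpow_one |θ|]
      exact Real.rpow_le_rpow_of_exponent_ge (abs_pos.mpr hθ0) hθ hγ1
    linarith
  · push_neg at hθ
    have h1 : ‖Complex.exp ((θ : ℂ) * I) - 1‖ ≤ 2 := by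
      calc ‖Complex.exp ((θ : ℂ) * I) - 1‖
          ≤ ‖Complex.exp ((θ : ℂ) * I)‖ + ‖(1 : ℂ)‖ := norm_sub_le _ _
        _ = 2 := by
            rw [Complex.norm_exp_ofReal_mul_I]; norm_num
    have h2 : (1 : ℝ) ≤ |θ| ^ γ := by
      calc (1 : ℝ) = 1 ^ γ := (Real.one_rpow γ).symm
        _ ≤ |θ| ^ γ := Real.rpow_le_rpow zero_le_one hθ.le hγ0.le
    linarith

lemma aux_diff_rpow {γ : ℝ} (hγ0 : 0 < γ) (hγ1 : γ ≤ 1) (a b : ℝ) :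
    |a - b| ^ γ ≤ 2 * (1 + a ^ 2) ^ (γ / 2) * (1 + b ^ 2) ^ (γ / 2) := by
  set s := Real.sqrt (1 + a ^ 2) with hs
  set u := Real.sqrt (1 + b ^ 2) with hu
  have hs1 : 1 ≤ s := by
    nlinarith [Real.sq_sqrt (show (0:ℝ) ≤ 1 + a ^ 2 by positivity),
      Real.sqrt_nonneg (1 + a ^ 2)]
  have hu1 : 1 ≤ u := by
    nlinarith [Real.sq_sqrt (show (0:ℝ) ≤ 1 + b ^ 2 by positivity),
      Real.sqrt_nonneg (1 + b ^ 2)]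
  have ha : |a| ≤ s := by
    rw [← Real.sqrt_sq_eq_abs]; exact Real.sqrt_le_sqrt (by nlinarith)
  have hb : |b| ≤ u := by
    rw [← Real.sqrt_sq_eq_abs]; exact Real.sqrt_le_sqrt (by nlinarith)
  have key : |a - b| ≤ 2 * (s * u) := by
    have h0 : |a - b| ≤ |a| + |b| := abs_sub a b
    nlinarith
  have hs0 : (0:ℝ) ≤ s := by linarith
  have hu0 : (0:ℝ) ≤ u := by linarith
  have hsg : s ^ γ = (1 + a ^ 2) ^ (γ / 2) := by
    rw [hs, Real.sqrt_eq_rpow, ← Real.rpow_mul (by positivity)]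
    ring_nf
  have hug : u ^ γ = (1 + b ^ 2) ^ (γ / 2) := by
    rw [hu, Real.sqrt_eq_rpow, ← Real.rpow_mul (by positivity)]
    ring_nf
  calc |a - b| ^ γ ≤ (2 * (s * u)) ^ γ :=
        Real.rpow_le_rpow (abs_nonneg _) key hγ0.le
    _ = 2 ^ γ * (s ^ γ * u ^ γ) := by
        rw [Real.mul_rpow (by norm_num) (by positivity),
          Real.mul_rpow hs0 hu0]
    _ ≤ 2 * (s ^ γ * u ^ γ) := by
        have h2 : (2:ℝ) ^ γ ≤ 2 := by
          calc (2:ℝ) ^ γ ≤ 2 ^ (1:ℝ) :=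
                Real.rpow_le_rpow_of_exponent_le one_le_two hγ1
            _ = 2 := Real.rpow_one 2
        have : (0:ℝ) ≤ s ^ γ * u ^ γ := by positivity
        nlinarith
    _ = 2 * (1 + a ^ 2) ^ (γ / 2) * (1 + b ^ 2) ^ (γ / 2) := by
        rw [hsg, hug]; ring

lemma aux_theta {γ : ℝ} (hγ0 : 0 < γ) (hγ1 : γ ≤ 1) {t : ℝ} (ht : 1 ≤ t) (x₁ x₂ x₃ : ℝ)
    (hd1 : |x₁ - x₂| ^ γ ≤ 2 * (1 + x₁ ^ 2) ^ (γ / 2) * (1 + x₂ ^ 2) ^ (γ / 2))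
    (hd2 : |x₂ - x₃| ^ γ ≤ 2 * (1 + x₂ ^ 2) ^ (γ / 2) * (1 + x₃ ^ 2) ^ (γ / 2)) :
    2 * |(x₁ - x₂) * (x₂ - x₃) / (2 * t)| ^ γ ≤
      8 * t ^ (-γ) * ((1 + x₁ ^ 2) ^ (γ / 2) * ((1 + x₂ ^ 2) ^ γ * (1 + x₃ ^ 2) ^ (γ / 2))) := by
  have ht0 : (0:ℝ) < t := lt_of_lt_of_le one_pos ht
  have habs : |(x₁ - x₂) * (x₂ - x₃) / (2 * t)| = |x₁ - x₂| * |x₂ - x₃| / (2 * t) := by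
    rw [abs_div, abs_mul, abs_of_pos (by positivity : (0:ℝ) < 2 * t)]
  have hr : |(x₁ - x₂) * (x₂ - x₃) / (2 * t)| ^ γ ≤
      |x₁ - x₂| ^ γ * |x₂ - x₃| ^ γ * t ^ (-γ) := by
    rw [habs, Real.div_rpow (by positivity) (by positivity),
      Real.mul_rpow (abs_nonneg _) (abs_nonneg _), div_eq_mul_inv,
      ← Real.rpow_neg (by positivity : (0:ℝ) ≤ 2 * t)]
    have h2t : (2 * t) ^ (-γ) ≤ t ^ (-γ) :=
      Real.rpow_le_rpow_of_nonpos ht0 (by linarith) (by linarith)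
    have : (0:ℝ) ≤ |x₁ - x₂| ^ γ * |x₂ - x₃| ^ γ := by positivity
    nlinarith
  have ha1 : (0:ℝ) ≤ |x₁ - x₂| ^ γ := by positivity
  have ha2 : (0:ℝ) ≤ |x₂ - x₃| ^ γ := by positivity
  have hb1 : (0:ℝ) ≤ 2 * (1 + x₁ ^ 2) ^ (γ / 2) * (1 + x₂ ^ 2) ^ (γ / 2) := by positivity
  have htn : (0:ℝ) ≤ t ^ (-γ) := Real.rpow_nonneg ht0.le _
  have hmul : |x₁ - x₂| ^ γ * |x₂ - x₃| ^ γ ≤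
      (2 * (1 + x₁ ^ 2) ^ (γ / 2) * (1 + x₂ ^ 2) ^ (γ / 2)) *
        (2 * (1 + x₂ ^ 2) ^ (γ / 2) * (1 + x₃ ^ 2) ^ (γ / 2)) :=
    mul_le_mul hd1 hd2 ha2 hb1
  have hsq : (1 + x₂ ^ 2) ^ (γ / 2) * (1 + x₂ ^ 2) ^ (γ / 2) = (1 + x₂ ^ 2) ^ γ := by
    rw [← Real.rpow_add (by positivity : (0:ℝ) < 1 + x₂ ^ 2)]; ring_nf
  calc 2 * |(x₁ - x₂) * (x₂ - x₃) / (2 * t)| ^ γ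
      ≤ 2 * (|x₁ - x₂| ^ γ * |x₂ - x₃| ^ γ * t ^ (-γ)) := by linarith
    _ ≤ 2 * ((2 * (1 + x₁ ^ 2) ^ (γ / 2) * (1 + x₂ ^ 2) ^ (γ / 2)) *
          (2 * (1 + x₂ ^ 2) ^ (γ / 2) * (1 + x₃ ^ 2) ^ (γ / 2)) * t ^ (-γ)) := by
        have := mul_le_mul_of_nonneg_right hmul htn
        linarith
    _ = 8 * t ^ (-γ) * ((1 + x₁ ^ 2) ^ (γ / 2) *
          (((1 + x₂ ^ 2) ^ (γ / 2) * (1 + x₂ ^ 2) ^ (γ / 2)) * (1 + x₃ ^ 2) ^ (γ / 2))) := by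
        ring
    _ = 8 * t ^ (-γ) * ((1 + x₁ ^ 2) ^ (γ / 2) * ((1 + x₂ ^ 2) ^ γ * (1 + x₃ ^ 2) ^ (γ / 2))) := by
        rw [hsq]

lemma aux_cs {q : ℝ} (hq0 : 0 < q) (hq : q < 1/4) (f : ℝ → ℂ)
    (hf : Integrable (fun x : ℝ => (1 + x ^ 2) * ‖f x‖ ^ 2)) :
    Integrable (fun x : ℝ => (1 + x ^ 2) ^ q * ‖f x‖) ∧
    ∫ x : ℝ, (1 + x ^ 2) ^ q * ‖f x‖ ≤
      (∫ x : ℝ, (1 + x ^ 2) ^ (2 * q - 1)) ^ (1/2 : ℝ) * japL2 f := by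
  have hw : Integrable (fun x : ℝ => (1 + x ^ 2) ^ (2 * q - 1)) :=
    aux_weight_integrable (by linarith)
  -- measurability of ‖f ·‖
  have hfm : AEMeasurable (fun x : ℝ => ‖f x‖) := by
    have h1 : AEMeasurable (fun x : ℝ => (1 + x ^ 2) * ‖f x‖ ^ 2) := hf.aemeasurable
    have h2 : AEMeasurable
        (fun x : ℝ => Real.sqrt ((1 + x ^ 2) * ‖f x‖ ^ 2 / (1 + x ^ 2))) :=
      Real.continuous_sqrt.measurable.comp_aemeasurable
        (h1.div ((measurable_const.add (measurable_id.pow_const 2)).aemeasurable))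
    refine h2.congr (Filter.Eventually.of_forall fun x => ?_)
    have hx : (1:ℝ) + x ^ 2 ≠ 0 := by positivity
    show Real.sqrt ((1 + x ^ 2) * ‖f x‖ ^ 2 / (1 + x ^ 2)) = ‖f x‖
    rw [mul_comm, mul_div_assoc, div_self hx, mul_one, Real.sqrt_sq (norm_nonneg _)]
  set φ : ℝ → ℝ := fun x => (1 + x ^ 2) ^ (q - 1/2) with hφdef
  set ψ : ℝ → ℝ := fun x => (1 + x ^ 2) ^ ((1:ℝ)/2) * ‖f x‖ with hψdef
  have hbase : Continuous (fun x : ℝ => (1:ℝ) + x ^ 2) :=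
    continuous_const.add (continuous_pow 2)
  have hφm : Measurable φ :=
    (hbase.rpow_const fun x => Or.inl (by positivity)).measurable
  have hψbm : Measurable (fun x : ℝ => (1 + x ^ 2 : ℝ) ^ ((1:ℝ)/2)) :=
    (hbase.rpow_const fun x => Or.inl (by positivity)).measurable
  have hψm : AEStronglyMeasurable ψ volume :=
    (hψbm.aemeasurable.mul hfm).aestronglyMeasurable
  have hψsq : (fun x : ℝ => ψ x ^ 2) = fun x : ℝ => (1 + x ^ 2) * ‖f x‖ ^ 2 := by
    funext x
    have h0 : (0:ℝ) ≤ 1 + x ^ 2 := by positivity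
    rw [hψdef]
    simp only
    rw [mul_pow, ← Real.rpow_natCast ((1 + x ^ 2) ^ ((1:ℝ)/2)) 2, ← Real.rpow_mul h0]
    norm_num
  have hφsq : (fun x : ℝ => φ x ^ 2) = fun x : ℝ => (1 + x ^ 2) ^ (2 * q - 1) := by
    funext x
    have h0 : (0:ℝ) ≤ 1 + x ^ 2 := by positivity
    rw [hφdef]
    simp only
    rw [← Real.rpow_natCast ((1 + x ^ 2) ^ (q - 1/2)) 2, ← Real.rpow_mul h0]
    ring_nf
  have hφ2 : MemLp φ 2 volume := by
    rw [memLp_two_iff_integrable_sq hφm.aestronglyMeasurable, hφsq]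
    exact hw
  have hψ2 : MemLp ψ 2 volume := by
    rw [memLp_two_iff_integrable_sq hψm, hψsq]
    exact hf
  have hprod : ∀ x : ℝ, (1 + x ^ 2) ^ q * ‖f x‖ = φ x * ψ x := by
    intro x
    rw [hφdef, hψdef]
    simp only
    rw [← mul_assoc, ← Real.rpow_add (by positivity : (0:ℝ) < 1 + x ^ 2)]
    norm_num
  have hint : Integrable (fun x : ℝ => φ x * ψ x) := by
    refine Integrable.mono'
      (g := fun x : ℝ => (1 + x ^ 2) ^ (2 * q - 1) + (1 + x ^ 2) * ‖f x‖ ^ 2)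
      (hw.add hf) (hφm.aemeasurable.mul (hψm.aemeasurable)).aestronglyMeasurable
      (Filter.Eventually.of_forall fun x => ?_)
    have h1 : (0:ℝ) ≤ φ x := Real.rpow_nonneg (by positivity) _
    have h2 : (0:ℝ) ≤ ψ x := mul_nonneg (Real.rpow_nonneg (by positivity) _) (norm_nonneg _)
    have e2 := congrFun hφsq x
    have e3 := congrFun hψsq x
    rw [Real.norm_of_nonneg (mul_nonneg h1 h2)]
    show φ x * ψ x ≤ (1 + x ^ 2) ^ (2 * q - 1) + (1 + x ^ 2) * ‖f x‖ ^ 2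
    rw [← e2, ← e3]
    nlinarith [sq_nonneg (φ x - ψ x)]
  constructor
  · exact hint.congr (Filter.Eventually.of_forall fun x => (hprod x).symm)
  · have hCS := integral_mul_le_Lp_mul_Lq_of_nonneg
      (μ := volume) (p := 2) (q := 2) (f := φ) (g := ψ) Real.HolderConjugate.two_two
      (Filter.Eventually.of_forall fun x => Real.rpow_nonneg (by positivity) _)
      (Filter.Eventually.of_forall fun x =>
        mul_nonneg (Real.rpow_nonneg (by positivity) _) (norm_nonneg _))
      (by rw [show ENNReal.ofReal (2:ℝ) = 2 by norm_num]; exact hφ2)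
      (by rw [show ENNReal.ofReal (2:ℝ) = 2 by norm_num]; exact hψ2)
    have e1 : ∫ x : ℝ, φ x * ψ x = ∫ x : ℝ, (1 + x ^ 2) ^ q * ‖f x‖ :=
      integral_congr_ae (Filter.Eventually.of_forall fun x => (hprod x).symm)
    have e2 : (fun x : ℝ => φ x ^ (2:ℝ)) = fun x : ℝ => (1 + x ^ 2) ^ (2 * q - 1) := by
      funext x; rw [Real.rpow_two]; exact congrFun hφsq x
    have e3 : (fun x : ℝ => ψ x ^ (2:ℝ)) = fun x : ℝ => (1 + x ^ 2) * ‖f x‖ ^ 2 := by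
      funext x; rw [Real.rpow_two]; exact congrFun hψsq x
    rw [e1, e2, e3] at hCS
    simpa [japL2, one_div] using hCS

/-- For `γ ∈ (0,1/4)` and `t ≥ 1`:
`sup_ξ |𝒪^t[f,g,h](ξ)| ≤ C_γ t^{−1−γ} ‖⟨x⟩f‖_{L²} ‖⟨x⟩g‖_{L²} ‖⟨x⟩h‖_{L²}`. -/
theorem stmt15 (γ : ℝ) (hγ : 0 < γ) (hγ' : γ < 1/4) :
    ∃ C : ℝ, 0 < C ∧ ∀ f g h : ℝ → ℂ,
      Integrable (fun x : ℝ => (1 + x ^ 2) * ‖f x‖ ^ 2) →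
      Integrable (fun x : ℝ => (1 + x ^ 2) * ‖g x‖ ^ 2) →
      Integrable (fun x : ℝ => (1 + x ^ 2) * ‖h x‖ ^ 2) →
      ∀ t : ℝ, 1 ≤ t → ∀ ξ : ℝ,
        ‖spaceNR t f g h ξ‖ ≤ C * t ^ (-1 - γ) * japL2 f * japL2 g * japL2 h := by
  have hγ1 : γ ≤ 1 := by linarith
  set Kf : ℝ := (∫ x : ℝ, (1 + x ^ 2) ^ (2 * (γ/2) - 1)) ^ (1/2 : ℝ) with hKfdef
  set Kg : ℝ := (∫ x : ℝ, (1 + x ^ 2) ^ (2 * γ - 1)) ^ (1/2 : ℝ) with hKgdef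
  have hKf0 : 0 ≤ Kf := Real.rpow_nonneg
    (integral_nonneg fun x => Real.rpow_nonneg (by positivity) _) _
  have hKg0 : 0 ≤ Kg := Real.rpow_nonneg
    (integral_nonneg fun x => Real.rpow_nonneg (by positivity) _) _
  have hC0 : (0:ℝ) ≤ 8 * π * Kf ^ 2 * Kg :=
    mul_nonneg (mul_nonneg (mul_nonneg (by norm_num) Real.pi_pos.le) (sq_nonneg _)) hKg0
  refine ⟨8 * π * Kf ^ 2 * Kg + 1, by linarith, ?_⟩
  intro f g h hf hg hh t ht ξ
  have ht0 : (0:ℝ) < t := lt_of_lt_of_le one_pos ht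
  have htneg : (0:ℝ) ≤ t ^ (-γ) := Real.rpow_nonneg ht0.le _
  obtain ⟨hFint, hFle⟩ := aux_cs (q := γ/2) (by linarith) (by linarith) f hf
  obtain ⟨hGint, hGle⟩ := aux_cs (q := γ) hγ hγ' g hg
  obtain ⟨hHint, hHle⟩ := aux_cs (q := γ/2) (by linarith) (by linarith) h hh
  set aF := ∫ x : ℝ, (1 + x ^ 2) ^ (γ/2) * ‖f x‖ with haF
  set aG := ∫ x : ℝ, (1 + x ^ 2) ^ γ * ‖g x‖ with haG
  set aH := ∫ x : ℝ, (1 + x ^ 2) ^ (γ/2) * ‖h x‖ with haH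
  have haF0 : 0 ≤ aF := by
    rw [haF]
    exact integral_nonneg fun x =>
      mul_nonneg (Real.rpow_nonneg (by positivity) _) (norm_nonneg _)
  have haG0 : 0 ≤ aG := by
    rw [haG]
    exact integral_nonneg fun x =>
      mul_nonneg (Real.rpow_nonneg (by positivity) _) (norm_nonneg _)
  have haH0 : 0 ≤ aH := by
    rw [haH]
    exact integral_nonneg fun x =>
      mul_nonneg (Real.rpow_nonneg (by positivity) _) (norm_nonneg _)
  have hjf : 0 ≤ japL2 f := Real.rpow_nonneg (integral_nonneg fun x => by positivity) _
  have hjg : 0 ≤ japL2 g := Real.rpow_nonneg (integral_nonneg fun x => by positivity) _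
  have hjh : 0 ≤ japL2 h := Real.rpow_nonneg (integral_nonneg fun x => by positivity) _
  -- pointwise bound on the integrand
  have key : ∀ x₁ x₂ x₃ : ℝ,
      ‖f x₁ * (starRingEnd ℂ) (g x₂) * h x₃ *
          Complex.exp (-I * ξ * ((x₁ : ℂ) - x₂ + x₃)) *
          (Complex.exp (-I * ((x₁ : ℂ) - x₂) * ((x₂ : ℂ) - x₃) / (2 * t)) - 1)‖ ≤
        8 * t ^ (-γ) * ((1 + x₁ ^ 2) ^ (γ/2) * ‖f x₁‖) *
          ((1 + x₂ ^ 2) ^ γ * ‖g x₂‖) * ((1 + x₃ ^ 2) ^ (γ/2) * ‖h x₃‖) := by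
    intro x₁ x₂ x₃
    have hE1 : ‖Complex.exp (-I * ξ * ((x₁ : ℂ) - x₂ + x₃))‖ = 1 := by
      rw [show -I * (ξ:ℂ) * ((x₁:ℂ) - x₂ + x₃)
          = ((-(ξ * (x₁ - x₂ + x₃)) : ℝ) : ℂ) * I by push_cast; ring]
      rw [Complex.norm_exp_ofReal_mul_I]
    have htne : ((t:ℂ)) ≠ 0 := by exact_mod_cast ht0.ne'
    have hθarg : -I * ((x₁:ℂ) - x₂) * ((x₂:ℂ) - x₃) / (2 * (t:ℂ)) =
        ((-((x₁ - x₂) * (x₂ - x₃) / (2 * t)) : ℝ) : ℂ) * I := by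
      push_cast
      field_simp
    have hE2 : ‖Complex.exp (-I * ((x₁:ℂ) - x₂) * ((x₂:ℂ) - x₃) / (2 * t)) - 1‖ ≤
        2 * |(x₁ - x₂) * (x₂ - x₃) / (2 * t)| ^ γ := by
      rw [hθarg]
      simpa [abs_neg] using aux_exp_bound hγ hγ1 (-((x₁ - x₂) * (x₂ - x₃) / (2 * t)))
    have hreal : 2 * |(x₁ - x₂) * (x₂ - x₃) / (2 * t)| ^ γ ≤
        8 * t ^ (-γ) * ((1 + x₁ ^ 2) ^ (γ/2) * ((1 + x₂ ^ 2) ^ γ * (1 + x₃ ^ 2) ^ (γ/2))) :=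
      aux_theta hγ hγ1 ht x₁ x₂ x₃ (aux_diff_rpow hγ hγ1 x₁ x₂) (aux_diff_rpow hγ hγ1 x₂ x₃)
    have hnorm : ‖f x₁ * (starRingEnd ℂ) (g x₂) * h x₃ *
          Complex.exp (-I * ξ * ((x₁ : ℂ) - x₂ + x₃)) *
          (Complex.exp (-I * ((x₁ : ℂ) - x₂) * ((x₂ : ℂ) - x₃) / (2 * t)) - 1)‖
        = ‖f x₁‖ * ‖g x₂‖ * ‖h x₃‖ *
          ‖Complex.exp (-I * ((x₁ : ℂ) - x₂) * ((x₂ : ℂ) - x₃) / (2 * t)) - 1‖ := by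
      simp only [norm_mul, hE1, mul_one, RCLike.norm_conj]
    rw [hnorm]
    have h0 : (0:ℝ) ≤ ‖f x₁‖ * ‖g x₂‖ * ‖h x₃‖ := by positivity
    calc ‖f x₁‖ * ‖g x₂‖ * ‖h x₃‖ *
          ‖Complex.exp (-I * ((x₁ : ℂ) - x₂) * ((x₂ : ℂ) - x₃) / (2 * t)) - 1‖
        ≤ ‖f x₁‖ * ‖g x₂‖ * ‖h x₃‖ *
          (8 * t ^ (-γ) * ((1 + x₁ ^ 2) ^ (γ/2) * ((1 + x₂ ^ 2) ^ γ * (1 + x₃ ^ 2) ^ (γ/2)))) :=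
          mul_le_mul_of_nonneg_left (hE2.trans hreal) h0
      _ = 8 * t ^ (-γ) * ((1 + x₁ ^ 2) ^ (γ/2) * ‖f x₁‖) *
          ((1 + x₂ ^ 2) ^ γ * ‖g x₂‖) * ((1 + x₃ ^ 2) ^ (γ/2) * ‖h x₃‖) := by ring
  -- iterated integral bounds
  have inner3 : ∀ x₁ x₂ : ℝ,
      ‖∫ x₃ : ℝ, f x₁ * (starRingEnd ℂ) (g x₂) * h x₃ *
          Complex.exp (-I * ξ * ((x₁ : ℂ) - x₂ + x₃)) *
          (Complex.exp (-I * ((x₁ : ℂ) - x₂) * ((x₂ : ℂ) - x₃) / (2 * t)) - 1)‖ ≤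
        (8 * t ^ (-γ) * ((1 + x₁ ^ 2) ^ (γ/2) * ‖f x₁‖) * ((1 + x₂ ^ 2) ^ γ * ‖g x₂‖)) * aH := by
    intro x₁ x₂
    have hb := norm_integral_le_of_norm_le
      (g := fun x₃ : ℝ => (8 * t ^ (-γ) * ((1 + x₁ ^ 2) ^ (γ/2) * ‖f x₁‖) *
        ((1 + x₂ ^ 2) ^ γ * ‖g x₂‖)) * ((1 + x₃ ^ 2) ^ (γ/2) * ‖h x₃‖))
      (hHint.const_mul _)
      (Filter.Eventually.of_forall fun x₃ => (key x₁ x₂ x₃).trans_eq (by ring))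
    rwa [integral_const_mul, ← haH] at hb
  have inner2 : ∀ x₁ : ℝ,
      ‖∫ x₂ : ℝ, ∫ x₃ : ℝ, f x₁ * (starRingEnd ℂ) (g x₂) * h x₃ *
          Complex.exp (-I * ξ * ((x₁ : ℂ) - x₂ + x₃)) *
          (Complex.exp (-I * ((x₁ : ℂ) - x₂) * ((x₂ : ℂ) - x₃) / (2 * t)) - 1)‖ ≤
        (8 * t ^ (-γ) * ((1 + x₁ ^ 2) ^ (γ/2) * ‖f x₁‖) * aH) * aG := by
    intro x₁
    have hb := norm_integral_le_of_norm_le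
      (g := fun x₂ : ℝ => (8 * t ^ (-γ) * ((1 + x₁ ^ 2) ^ (γ/2) * ‖f x₁‖) * aH) *
        ((1 + x₂ ^ 2) ^ γ * ‖g x₂‖))
      (hGint.const_mul _)
      (Filter.Eventually.of_forall fun x₂ => (inner3 x₁ x₂).trans_eq (by ring))
    rwa [integral_const_mul, ← haG] at hb
  have inner1 :
      ‖∫ x₁ : ℝ, ∫ x₂ : ℝ, ∫ x₃ : ℝ, f x₁ * (starRingEnd ℂ) (g x₂) * h x₃ *
          Complex.exp (-I * ξ * ((x₁ : ℂ) - x₂ + x₃)) *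
          (Complex.exp (-I * ((x₁ : ℂ) - x₂) * ((x₂ : ℂ) - x₃) / (2 * t)) - 1)‖ ≤
        8 * t ^ (-γ) * (aF * aG * aH) := by
    have hb := norm_integral_le_of_norm_le
      (g := fun x₁ : ℝ => (8 * t ^ (-γ) * aH * aG) * ((1 + x₁ ^ 2) ^ (γ/2) * ‖f x₁‖))
      (hFint.const_mul _)
      (Filter.Eventually.of_forall fun x₁ => (inner2 x₁).trans_eq (by ring))
    rw [integral_const_mul, ← haF] at hb
    exact hb.trans_eq (by ring)
  -- conclusion
  have hfle : aF ≤ Kf * japL2 f := by rw [hKfdef]; exact hFle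
  have hgle : aG ≤ Kg * japL2 g := by rw [hKgdef]; exact hGle
  have hhle : aH ≤ Kf * japL2 h := by rw [hKfdef]; exact hHle
  have hprodle : aF * aG * aH ≤ (Kf * japL2 f) * (Kg * japL2 g) * (Kf * japL2 h) := by
    have h1 : aF * aG ≤ (Kf * japL2 f) * (Kg * japL2 g) :=
      mul_le_mul hfle hgle haG0 (mul_nonneg hKf0 hjf)
    exact mul_le_mul h1 hhle haH0
      (mul_nonneg (mul_nonneg hKf0 hjf) (mul_nonneg hKg0 hjg))
  have hπt : (0:ℝ) ≤ π / t := div_nonneg Real.pi_pos.le ht0.le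
  have hrw : ‖spaceNR t f g h ξ‖ = (π / t) *
      ‖∫ x₁ : ℝ, ∫ x₂ : ℝ, ∫ x₃ : ℝ, f x₁ * (starRingEnd ℂ) (g x₂) * h x₃ *
          Complex.exp (-I * ξ * ((x₁ : ℂ) - x₂ + x₃)) *
          (Complex.exp (-I * ((x₁ : ℂ) - x₂) * ((x₂ : ℂ) - x₃) / (2 * t)) - 1)‖ := by
    unfold spaceNR
    rw [norm_mul, Complex.norm_real, Real.norm_eq_abs, _root_.abs_of_nonneg hπt]
  rw [hrw]
  have hts : t ^ (-1 - γ) = t⁻¹ * t ^ (-γ) := by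
    rw [show (-1 - γ : ℝ) = (-1) + (-γ) by ring, Real.rpow_add ht0, Real.rpow_neg_one]
  have hrest : 0 ≤ t ^ (-1 - γ) * japL2 f * japL2 g * japL2 h :=
    mul_nonneg (mul_nonneg (mul_nonneg (Real.rpow_nonneg ht0.le _) hjf) hjg) hjh
  calc (π / t) *
      ‖∫ x₁ : ℝ, ∫ x₂ : ℝ, ∫ x₃ : ℝ, f x₁ * (starRingEnd ℂ) (g x₂) * h x₃ *
          Complex.exp (-I * ξ * ((x₁ : ℂ) - x₂ + x₃)) *
          (Complex.exp (-I * ((x₁ : ℂ) - x₂) * ((x₂ : ℂ) - x₃) / (2 * t)) - 1)‖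
      ≤ (π / t) * (8 * t ^ (-γ) * (aF * aG * aH)) :=
        mul_le_mul_of_nonneg_left inner1 hπt
    _ ≤ (π / t) * (8 * t ^ (-γ) *
          ((Kf * japL2 f) * (Kg * japL2 g) * (Kf * japL2 h))) :=
        mul_le_mul_of_nonneg_left
          (mul_le_mul_of_nonneg_left hprodle (mul_nonneg (by norm_num) htneg)) hπt
    _ = (8 * π * Kf ^ 2 * Kg) * (t ^ (-1 - γ) * japL2 f * japL2 g * japL2 h) := by
        rw [hts, div_eq_mul_inv]; ring
    _ ≤ (8 * π * Kf ^ 2 * Kg + 1) * (t ^ (-1 - γ) * japL2 f * japL2 g * japL2 h) := by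
        exact mul_le_mul_of_nonneg_right (by linarith) hrest
    _ = (8 * π * Kf ^ 2 * Kg + 1) * t ^ (-1 - γ) * japL2 f * japL2 g * japL2 h := by ring
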